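/- arXiv:1912.08865 — 3 statements merged into one kernel-verified Lean document; each statement's English description precedes it below -/
import Mathlib

section
/- Let H be a class of sign-activation neural network functions whose growth function satisfies τ_H(m) ≤ (em)^{|E|} for all m ≥ 1, where |E| ≥ 1 is the number of edges. Then the VC-dimension of H is at most (2|E|/log 2)·log(e|E|/log 2), hence O(|E| log |E|). -/
open Real

def restrictSet {X Y : Type*} (H : Set (X → Y)) (C : Finset X) : Set ({x // x ∈ C} → Y) :=
  {g | ∃ h ∈ H, ∀ c : {x // x ∈ C}, g c = h c}

noncomputable def growth {X Y : Type*} (H : Set (X → Y)) (m : ℕ) : ℕ :=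
  ⨆ C : {C : Finset X // C.card = m}, (restrictSet H C.1).ncard

/-!
Taking logarithms, `2 ^ m ≤ (e m) ^ E` becomes `m log 2 ≤ E log (e m)`. Bounding the concave
function `log` by its tangent line at `a = 2 e E / log 2`, the right-hand side is at most
`(m log 2) / 2 + E log (2 E / log 2)`. Hence `m ≤ (2 E / log 2) log (2 E / log 2)`, which is
at most the claimed bound since `2 ≤ e`.
-/

lemma Real.log_le_div_add_log_sub_one {x a : ℝ} (hx : 0 < x) (ha : 0 < a) :
    log x ≤ x / a + log a - 1 := by
  have := log_le_sub_one_of_pos (div_pos hx ha)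
  rw [log_div hx.ne' ha.ne'] at this
  linarith

lemma le_mul_log_of_mul_log_two_le {m E : ℝ} (hm : 0 < m) (hE : 0 < E)
    (h : m * log 2 ≤ E * log (exp 1 * m)) :
    m ≤ 2 * E / log 2 * log (2 * E / log 2) := by
  have hlog2 : 0 < log 2 := log_pos one_lt_two
  set a := 2 * E / log 2 with ha_def
  have ha : 0 < a := by positivity
  have tangent := log_le_div_add_log_sub_one (by positivity : 0 < exp 1 * m)
    (by positivity : 0 < exp 1 * a)
  rw [log_mul (exp_pos 1).ne' ha.ne', log_exp] at tangent
  have hbound : E * log (exp 1 * m) ≤ m * log 2 / 2 + E * log a :=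
    calc E * log (exp 1 * m)
        ≤ E * (exp 1 * m / (exp 1 * a) + (1 + log a) - 1) :=
          mul_le_mul_of_nonneg_left tangent hE.le
      _ = m * log 2 / 2 + E * log a := by
          rw [ha_def]
          field_simp
          ring
  rw [div_mul_eq_mul_div, le_div_iff₀ hlog2]
  linarith

/-- A class `H` shatters some set of size `m` iff its growth function at `m` is `2 ^ m`.
If the growth function of a (sign-activation neural network) class `H` is bounded by
`(e m) ^ |E|` for all `m ≥ 1`, then any shattered set has size at most
`(2 |E| / log 2) · log (e |E| / log 2)`; i.e. the VC-dimension is `O(|E| log |E|)`. -/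
theorem vcDim_le_of_growth_le {X : Type*} (H : Set (X → Bool)) (E : ℕ) (hE : 1 ≤ E)
    (hgrowth : ∀ m : ℕ, 1 ≤ m → (growth H m : ℝ) ≤ (Real.exp 1 * m) ^ E) :
    ∀ m : ℕ, growth H m = 2 ^ m →
      (m : ℝ) ≤ (2 * E / Real.log 2) * Real.log (Real.exp 1 * E / Real.log 2) := by
  intro m hm
  have hE0 : (0 : ℝ) < E := by exact_mod_cast hE
  have hlog2 : 0 < log 2 := log_pos one_lt_two
  have hlog_le : log (2 * E / log 2) ≤ log (exp 1 * E / log 2) := by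
    gcongr
    linarith [add_one_le_exp (1 : ℝ)]
  rcases Nat.eq_zero_or_pos m with rfl | hm0
  · have : (1 : ℝ) ≤ 2 * E / log 2 := by
      rw [le_div_iff₀ hlog2]
      linarith [log_two_lt_d9, (by exact_mod_cast hE : (1 : ℝ) ≤ E)]
    push_cast
    exact mul_nonneg (by positivity) ((log_nonneg this).trans hlog_le)
  · have hpow : (2 : ℝ) ^ m ≤ (exp 1 * m) ^ E := by exact_mod_cast hm ▸ hgrowth m hm0
    have hlog : m * log 2 ≤ E * log (exp 1 * m) := by
      simpa only [log_pow] using log_le_log (by positivity) hpow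
    calc (m : ℝ) ≤ 2 * E / log 2 * log (2 * E / log 2) :=
          le_mul_log_of_mul_log_two_le (by exact_mod_cast hm0) hE0 hlog
      _ ≤ _ := mul_le_mul_of_nonneg_left hlog_le (by positivity)
end

section
/- Let H be the class of halfspace classifiers on R^1, h_{w,b}(x) = sign(wx + b) with (w,b) ∈ R^2, and let the adversary use neighborhoods N(x) = [x−ε, x+ε] for fixed ε ≥ 0. Then the corrupted class κ(H) can still shatter (via its loss class) a set of 2 points whenever the points are at distance greater than 2ε, so AVC(H, N) ≥ 2 = d + 1 with d = 1. -/
open Classical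

/-- Halfspace classifiers on `ℝ`: `sign(w x + b)`, with `+1` encoded as `true` and `−1`
(sign of nonpositive values) as `false`. -/
noncomputable def halfspaces : Set (ℝ → Bool) :=
  {h | ∃ w b : ℝ, h = fun x => decide (0 < w * x + b)}

/-- Corruption by the `ε`-interval adversary: `some true` if `h ≡ +1` on `N x`,
`some false` if `h ≡ −1` on `N x`, `none` (`⊥`) otherwise. -/
noncomputable def corrupt {X : Type*} (N : X → Set X) (h : X → Bool) : X → Option Bool :=
  fun x =>
    if ∀ x' ∈ N x, h x' = true then some true
    else if ∀ x' ∈ N x, h x' = false then some false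
    else none

/-- The 0-1 loss on corrupted outputs, `true` meaning loss 1. -/
noncomputable def loss (yt : Option Bool) (y : Bool) : Bool :=
  if yt = some y then false else true

/-- Shattering of `n` labeled points by the corrupted loss class of `H`. -/
def Shatters {X : Type*} (H : Set (X → Bool)) (N : X → Set X) (n : ℕ) : Prop :=
  ∃ pts : Fin n → X × Bool, ∀ v : Fin n → Bool,
    ∃ h ∈ H, ∀ i, loss (corrupt N h (pts i).1) (pts i).2 = v i

/-- Adversarial VC-dimension via the corrupted loss class. -/
noncomputable def AVC {X : Type*} (H : Set (X → Bool)) (N : X → Set X) : ℕ :=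
  sSup {n | Shatters H N n}

/-! `AVC` is an `sSup` in `ℕ`, which is `0` on unbounded sets, so the lower bound also needs an
upper bound: no three points are shattered. A halfspace on `ℝ` is monotone or antitone, so once it
is constant on the neighbourhood of `b` it keeps that value on a whole ray beyond one end of it;
for `a ≤ b ≤ c`, then `a` or `c` receives the same corrupted label as `b`, which rules out the
loss patterns forcing the corrupted label of `b` to be its true label and those of `a` and `c`
to differ from it. Two points at distance
more than `2ε` have disjoint neighbourhoods, which a constant or a separating halfspace labels
arbitrarily. -/

lemma corrupt_eq_some_iff {X : Type*} {N : X → Set X} {h : X → Bool} {x : X} {t : Bool}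
    (hx : (N x).Nonempty) : corrupt N h x = some t ↔ ∀ x' ∈ N x, h x' = t := by
  obtain ⟨p, hp⟩ := hx
  unfold corrupt
  cases t <;> split_ifs with htrue hfalse <;> simp_all
  exact ⟨p, hp⟩

lemma loss_some (t y : Bool) : loss (some t) y = (t != y) := by
  cases t <;> cases y <;> simp [loss]

lemma ne_some_of_loss_eq_beq {yt : Option Bool} {y t : Bool} (h : loss yt y = (y == t)) :
    yt ≠ some t := by
  rintro rfl
  cases y <;> cases t <;> simp [loss] at h

lemma le_AVC_of_shatters {X : Type*} {H : Set (X → Bool)} {N : X → Set X} {k m : ℕ}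
    (hbdd : ∀ n, m < n → ¬ Shatters H N n) (hk : Shatters H N k) : k ≤ AVC H N :=
  le_csSup (s := {n | Shatters H N n}) ⟨m, fun n hn => not_lt.1 fun h => hbdd n h hn⟩ hk

lemma not_shatters_of_corrupt_between {X : Type*} [LinearOrder X] {H : Set (X → Bool)}
    {N : X → Set X}
    (hH : ∀ h ∈ H, ∀ a b c : X, ∀ t : Bool, a ≤ b → b ≤ c → corrupt N h b = some t →
      corrupt N h a = some t ∨ corrupt N h c = some t)
    {n : ℕ} (hn : 3 ≤ n) : ¬ Shatters H N n := by
  rintro ⟨pts, hpts⟩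
  set σ := Tuple.sort fun l => (pts l).1
  have hsorted : Monotone ((fun l => (pts l).1) ∘ σ) := Tuple.monotone_sort _
  set i := σ ⟨0, by omega⟩
  set j := σ ⟨1, by omega⟩
  set k := σ ⟨2, by omega⟩
  -- loss `1` where the label is that of `j` and `0` where it is not: either way, the corrupted
  -- label differs from that of `j`
  obtain ⟨h, hh, hloss⟩ := hpts fun l => if l = j then false else ((pts l).2 == (pts j).2)
  have hj : corrupt N h (pts j).1 = some (pts j).2 := by
    simpa [loss_some, loss] using hloss j
  have hother : ∀ l ≠ j, corrupt N h (pts l).1 ≠ some (pts j).2 := fun l hl =>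
    ne_some_of_loss_eq_beq (by simpa [hl] using hloss l)
  have hij : (pts i).1 ≤ (pts j).1 := hsorted (Fin.mk_le_mk.2 zero_le_one)
  have hjk : (pts j).1 ≤ (pts k).1 := hsorted (Fin.mk_le_mk.2 one_le_two)
  rcases hH h hh _ _ _ _ hij hjk hj with hi | hk
  · exact hother i (σ.injective.ne (by simp)) hi
  · exact hother k (σ.injective.ne (by simp)) hk

lemma eq_on_Ici_or_Iic {α : Type*} [Preorder α] {h : α → Bool} (hh : Monotone h ∨ Antitone h)
    {p q : α} {t : Bool} (hp : h p = t) (hq : h q = t) :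
    (∀ x, p ≤ x → h x = t) ∨ (∀ x, x ≤ q → h x = t) := by
  rcases hh with hh | hh <;> cases t
  · exact Or.inr fun x hx => Bool.eq_false_of_le_false ((hh hx).trans_eq hq)
  · exact Or.inl fun x hx => top_le_iff.1 (hp.symm.trans_le (hh hx))
  · exact Or.inl fun x hx => Bool.eq_false_of_le_false ((hh hx).trans_eq hp)
  · exact Or.inr fun x hx => top_le_iff.1 (hq.symm.trans_le (hh hx))

lemma monotone_or_antitone_of_mem_halfspaces {h : ℝ → Bool} (hh : h ∈ halfspaces) :
    Monotone h ∨ Antitone h := by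
  obtain ⟨w, b, rfl⟩ := hh
  rcases le_total 0 w with hw | hw
  · refine Or.inl fun x y hxy => Bool.le_iff_imp.2 fun hx => ?_
    simp only [decide_eq_true_eq] at hx ⊢
    nlinarith
  · refine Or.inr fun x y hxy => Bool.le_iff_imp.2 fun hy => ?_
    simp only [decide_eq_true_eq] at hy ⊢
    nlinarith

section Interval

variable {ε : ℝ}

lemma corrupt_Icc_eq_some_iff (hε : 0 ≤ ε) {h : ℝ → Bool} {x : ℝ} {t : Bool} :
    corrupt (fun x => Set.Icc (x - ε) (x + ε)) h x = some t ↔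
      ∀ x' ∈ Set.Icc (x - ε) (x + ε), h x' = t :=
  corrupt_eq_some_iff (Set.nonempty_Icc.2 (by linarith))

lemma corrupt_Icc_eq_left_or_right (hε : 0 ≤ ε) {h : ℝ → Bool} (hh : Monotone h ∨ Antitone h)
    {a b c : ℝ} {t : Bool} (hab : a ≤ b) (hbc : b ≤ c)
    (hb : corrupt (fun x => Set.Icc (x - ε) (x + ε)) h b = some t) :
    corrupt (fun x => Set.Icc (x - ε) (x + ε)) h a = some t ∨
      corrupt (fun x => Set.Icc (x - ε) (x + ε)) h c = some t := by
  simp only [corrupt_Icc_eq_some_iff hε] at hb ⊢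
  rcases eq_on_Ici_or_Iic hh (hb _ (Set.left_mem_Icc.2 (by linarith)))
    (hb _ (Set.right_mem_Icc.2 (by linarith))) with hright | hleft
  · exact Or.inr fun x hx => hright x (by linarith [hx.1])
  · exact Or.inl fun x hx => hleft x (by linarith [hx.2])

lemma not_shatters_Icc (hε : 0 ≤ ε) {n : ℕ} (hn : 3 ≤ n) :
    ¬ Shatters halfspaces (fun x => Set.Icc (x - ε) (x + ε)) n :=
  not_shatters_of_corrupt_between (fun _ hh _ _ _ _ hab hbc =>
    corrupt_Icc_eq_left_or_right hε (monotone_or_antitone_of_mem_halfspaces hh) hab hbc) hn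

lemma exists_halfspace_false_on_Icc_true_on_Icc {a c : ℝ} (hd : 2 * ε < |a - c|) :
    ∃ h ∈ halfspaces, (∀ x ∈ Set.Icc (a - ε) (a + ε), h x = false) ∧
      ∀ x ∈ Set.Icc (c - ε) (c + ε), h x = true := by
  refine ⟨_, ⟨c - a, -(c - a) * ((a + c) / 2), rfl⟩, fun x ⟨hx₁, hx₂⟩ => ?_,
    fun x ⟨hx₁, hx₂⟩ => ?_⟩ <;>
  · simp only [decide_eq_false_iff_not, decide_eq_true_eq, not_lt]
    rcases lt_abs.1 hd with hac | hca <;> nlinarith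

lemma exists_halfspace_eq_on_Icc {x₁ x₂ : ℝ} (hd : 2 * ε < |x₁ - x₂|) (t₁ t₂ : Bool) :
    ∃ h ∈ halfspaces, (∀ x ∈ Set.Icc (x₁ - ε) (x₁ + ε), h x = t₁) ∧
      ∀ x ∈ Set.Icc (x₂ - ε) (x₂ + ε), h x = t₂ := by
  cases t₁ <;> cases t₂
  · exact ⟨_, ⟨0, 0, rfl⟩, fun _ _ => by simp, fun _ _ => by simp⟩
  · exact exists_halfspace_false_on_Icc_true_on_Icc hd
  · obtain ⟨h, hh, hfalse, htrue⟩ :=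
      exists_halfspace_false_on_Icc_true_on_Icc (by rwa [abs_sub_comm] at hd)
    exact ⟨h, hh, htrue, hfalse⟩
  · exact ⟨_, ⟨0, 1, rfl⟩, fun _ _ => by simp, fun _ _ => by simp⟩

lemma exists_halfspace_loss_eq (hε : 0 ≤ ε) {x₁ x₂ : ℝ} (hd : 2 * ε < |x₁ - x₂|) (v₁ v₂ : Bool) :
    ∃ h ∈ halfspaces,
      loss (corrupt (fun x => Set.Icc (x - ε) (x + ε)) h x₁) true = v₁ ∧
      loss (corrupt (fun x => Set.Icc (x - ε) (x + ε)) h x₂) true = v₂ := by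
  obtain ⟨h, hh, h₁, h₂⟩ := exists_halfspace_eq_on_Icc hd (!v₁) (!v₂)
  refine ⟨h, hh, ?_, ?_⟩
  · rw [(corrupt_Icc_eq_some_iff hε).2 h₁, loss_some]; cases v₁ <;> rfl
  · rw [(corrupt_Icc_eq_some_iff hε).2 h₂, loss_some]; cases v₂ <;> rfl

end Interval

/-- Halfspaces on `ℝ` against the `ε`-interval adversary: any two points at distance
greater than `2ε` are shattered (via the corrupted loss class), so the adversarial
VC-dimension is at least `2 = d + 1` for `d = 1`. -/
theorem halfspace_avc_ge_two (ε : ℝ) (hε : 0 ≤ ε) :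
    (∀ x₁ x₂ : ℝ, |x₁ - x₂| > 2 * ε →
      ∃ y₁ y₂ : Bool, ∀ v₁ v₂ : Bool,
        ∃ h ∈ halfspaces,
          loss (corrupt (fun x => Set.Icc (x - ε) (x + ε)) h x₁) y₁ = v₁ ∧
          loss (corrupt (fun x => Set.Icc (x - ε) (x + ε)) h x₂) y₂ = v₂) ∧
    2 ≤ AVC halfspaces (fun x => Set.Icc (x - ε) (x + ε)) := by
  refine ⟨fun x₁ x₂ hd => ⟨true, true, exists_halfspace_loss_eq hε hd⟩, ?_⟩
  refine le_AVC_of_shatters (m := 2) (fun _ => not_shatters_Icc hε)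
    ⟨![(0, true), (2 * ε + 1, true)], fun v => ?_⟩
  have hd : 2 * ε < |0 - (2 * ε + 1)| := by
    rw [zero_sub, abs_neg, abs_of_pos (by linarith)]; linarith
  obtain ⟨h, hh, h₀, h₁⟩ := exists_halfspace_loss_eq hε hd (v 0) (v 1)
  exact ⟨h, hh, Fin.forall_fin_two.2 ⟨h₀, h₁⟩⟩
end

section
/- Let H^(t,i) for t = 1,…,T and i = 1,…,|V_t| be function classes each of VC-dimension at most d_{t,i}, and let H be the layered composition of Cartesian products as in a feedforward sign-activation network. If m > (2|E|/log 2)·log(e|E|/log 2) where |E| = Σ_{t,i} d_{t,i} ≥ 1, then H cannot shatter any set of size m. -/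
open Real

universe u

def compClass (X : ℕ → Type u) (H : ∀ t, Set (X t → X (t + 1))) : ∀ T, Set (X 0 → X T)
  | 0 => {id}
  | T + 1 => {g | ∃ f ∈ compClass X H T, ∃ h ∈ H T, g = h ∘ f}

/-- The signal spaces of a sign-activation network: the input space `D`, and for layer
`t + 1` a vector of `V (t+1)` binary outputs, one per neuron. -/
def NetX (D : Type) (V : ℕ → ℕ) : ℕ → Type
  | 0 => D
  | t + 1 => Fin (V (t + 1)) → Bool

/-- The hypothesis class of layer `t`: the Cartesian product of the per-neuron
classes `H t i`. -/
def layerClass (D : Type) (V : ℕ → ℕ)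
    (H : ∀ t : ℕ, Fin (V (t + 1)) → Set (NetX D V t → Bool)) (t : ℕ) :
    Set (NetX D V t → NetX D V (t + 1)) :=
  {g | ∃ f : Fin (V (t + 1)) → (NetX D V t → Bool),
    (∀ i, f i ∈ H t i) ∧ g = fun x i => f i x}

/-! On a sample of `m` points a neuron class of VC-dimension at most `d` realises at most
`(m + 1) ^ d` sign patterns (Sauer–Shelah). A layer realises at most the product of the counts
of its neurons, and composing layers multiplies the counts, because a pattern of the first
layers fixes the inputs of the next one. So the network realises at most `(m + 1) ^ |E|`
patterns on the sample, and the bound on `m` makes this smaller than the `2 ^ m` patterns a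
shattered sample needs. -/

open Finset

section Trace

variable {X Y κ : Type*}

def traceOn (F : Set (X → Y)) (q : κ → X) : Set (κ → Y) :=
  (· ∘ q) '' F

open Classical in
/-- The traces on `q` as subsets of `Fin m`, the form to which Mathlib's Sauer–Shelah lemma
`Finset.card_shatterer_le_sum_vcDim` applies. -/
noncomputable def supportFamily {m : ℕ} (F : Set (X → Bool)) (q : Fin m → X) :
    Finset (Finset (Fin m)) :=
  {s | ∃ f ∈ F, s = univ.filter (fun j => f (q j))}

lemma traceOn_subset_image_supportFamily {m : ℕ} (F : Set (X → Bool)) (q : Fin m → X) :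
    traceOn F q ⊆ (fun s j => decide (j ∈ s)) '' (supportFamily F q : Set (Finset (Fin m))) := by
  rintro _ ⟨f, hf, rfl⟩
  exact ⟨univ.filter (fun j => f (q j)), by simpa [supportFamily] using ⟨f, hf, rfl⟩,
    by ext; simp⟩

lemma card_le_of_shatters_supportFamily {F : Set (X → Bool)} {d : ℕ}
    (hVC : ∀ k : ℕ, (∃ pts : Fin k → X, ∀ v : Fin k → Bool,
      ∃ f ∈ F, ∀ j, f (pts j) = v j) → k ≤ d)
    {m : ℕ} {q : Fin m → X} {s : Finset (Fin m)} (hs : (supportFamily F q).Shatters s) :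
    #s ≤ d := by
  classical
  set e := s.orderEmbOfFin rfl
  refine hVC _ ⟨q ∘ e, fun v => ?_⟩
  obtain ⟨u, hu, hsu⟩ := hs (t := (univ.filter (fun j => v j)).map e.toEmbedding) (by
    intro x hx
    obtain ⟨j, -, rfl⟩ := mem_map.1 hx
    exact s.orderEmbOfFin_mem rfl j)
  obtain ⟨f, hf, rfl⟩ : ∃ f ∈ F, u = univ.filter (fun j => f (q j)) := by
    simpa [supportFamily] using hu
  refine ⟨f, hf, fun j => ?_⟩
  have hej : e j ∈ s := s.orderEmbOfFin_mem rfl j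
  have := congrArg (e j ∈ ·) hsu
  simp only [mem_inter, hej, mem_filter, mem_univ, true_and] at this
  simpa using this

lemma sum_choose_le_succ_pow (m d : ℕ) : ∑ k ∈ Iic d, m.choose k ≤ (m + 1) ^ d := by
  rw [add_pow, ← Nat.range_succ_eq_Iic]
  gcongr with k hk
  simpa using Nat.le_mul_of_pos_right _
    (Nat.choose_pos (Nat.lt_succ_iff.1 (mem_range.1 hk))) |>.trans' (Nat.choose_le_pow m k)

theorem encard_traceOn_le_of_vc {F : Set (X → Bool)} {d : ℕ}
    (hVC : ∀ k : ℕ, (∃ pts : Fin k → X, ∀ v : Fin k → Bool,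
      ∃ f ∈ F, ∀ j, f (pts j) = v j) → k ≤ d)
    {m : ℕ} (q : Fin m → X) : (traceOn F q).encard ≤ ((m + 1) ^ d : ℕ) := by
  have hvcDim : (supportFamily F q).vcDim ≤ d :=
    Finset.sup_le fun s hs => card_le_of_shatters_supportFamily hVC (mem_shatterer.1 hs)
  calc (traceOn F q).encard
      ≤ (supportFamily F q : Set (Finset (Fin m))).encard :=
        (Set.encard_le_encard (traceOn_subset_image_supportFamily F q)).trans
          (Set.encard_image_le _ _)
    _ = #(supportFamily F q) := Set.encard_coe_eq_coe_finsetCard _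
    _ ≤ ∑ k ∈ Iic d, m.choose k := by
        gcongr
        calc _ ≤ #(supportFamily F q).shatterer := card_le_card_shatterer _
          _ ≤ _ := card_shatterer_le_sum_vcDim
          _ ≤ _ := by rw [Fintype.card_fin]; gcongr
    _ ≤ ((m + 1) ^ d : ℕ) := by gcongr; exact sum_choose_le_succ_pow m d

lemma encard_traceOn_pi_le {ι : Type*} [Fintype ι] (F : ι → Set (X → Y)) (q : κ → X) :
    (traceOn {g : X → ι → Y | ∃ f : ι → X → Y, (∀ i, f i ∈ F i) ∧ g = fun x i => f i x} q).encard
      ≤ ∏ i, (traceOn (F i) q).encard := by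
  rw [← Set.encard_pi_eq_prod_encard]
  refine le_of_le_of_eq (Set.encard_le_encard ?_) (Function.swap_bijective.injective.encard_image _)
  rintro _ ⟨_, ⟨f, hf, rfl⟩, rfl⟩
  exact ⟨fun i => f i ∘ q, fun i _ => ⟨f i, hf i, rfl⟩, rfl⟩

lemma traceOn_singleton_id (q : κ → X) : traceOn {id} q = {q} := by
  simp [traceOn]

lemma encard_traceOn_comp_le {Z : Type*} (F : Set (X → Y)) (G : Set (Y → Z)) (q : κ → X)
    {a b : ℕ} (hF : (traceOn F q).encard ≤ a) (hG : ∀ p : κ → Y, (traceOn G p).encard ≤ b) :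
    (traceOn {g | ∃ f ∈ F, ∃ h ∈ G, g = h ∘ f} q).encard ≤ (a * b : ℕ) := by
  have hsub : traceOn {g | ∃ f ∈ F, ∃ h ∈ G, g = h ∘ f} q ⊆ ⋃ p ∈ traceOn F q, traceOn G p := by
    rintro _ ⟨_, ⟨f, hf, h, hh, rfl⟩, rfl⟩
    exact Set.mem_biUnion ⟨f, hf, rfl⟩ ⟨h, hh, rfl⟩
  have hfin := Set.finite_of_encard_le_coe hF
  calc _ ≤ _ := Set.encard_le_encard hsub
    _ ≤ ∑ p ∈ hfin.toFinset, (traceOn G p).encard := by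
        simpa using hfin.toFinset.set_encard_biUnion_le (traceOn G)
    _ ≤ ∑ p ∈ hfin.toFinset, (b : ℕ∞) := sum_le_sum fun p _ => hG p
    _ ≤ (a * b : ℕ) := by
        rw [sum_const, nsmul_eq_mul, Nat.cast_mul]
        gcongr
        exact_mod_cast hfin.encard_eq_coe_toFinset_card ▸ hF

lemma encard_traceOn_compClass_le {X : ℕ → Type u} (H : ∀ t, Set (X t → X (t + 1)))
    (b : ℕ → ℕ) (hb : ∀ t (p : κ → X t), (traceOn (H t) p).encard ≤ b t) (q : κ → X 0) :
    ∀ T, (traceOn (compClass X H T) q).encard ≤ (∏ t ∈ range T, b t : ℕ)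
  | 0 => by simp [compClass, traceOn_singleton_id]
  | T + 1 => by
      rw [prod_range_succ]
      exact encard_traceOn_comp_le _ _ q (encard_traceOn_compClass_le H b hb q T) (hb T)

end Trace

lemma mul_log_add_one_lt_mul_log_two {E x : ℝ} (hE : 0 < E) (hx : 1 ≤ x)
    (h : 2 * E * (1 + log (E / log 2)) < x * log 2) :
    E * log (x + 1) < x * log 2 := by
  have hl2 : 0 < log 2 := log_pos one_lt_two
  have hl2' : log 2 < 1 := log_two_lt_d9.trans (by norm_num)
  have hlog_succ : log (x + 1) ≤ 1 + log x := by
    calc log (x + 1) ≤ log (exp 1 * x) := by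
          gcongr
          nlinarith [add_one_le_exp (1 : ℝ)]
      _ = 1 + log x := by rw [log_mul (exp_pos 1).ne' (by positivity), log_exp]
  -- `log y ≤ y - 1` at `y = x log 2 / (2E)`
  have hlog_le : log x ≤ x * log 2 / (2 * E) - 1 + log 2 + log (E / log 2) := by
    have hy : 0 < x * log 2 / (2 * E) := by positivity
    have hsplit : log x = log (x * log 2 / (2 * E)) + log 2 + log (E / log 2) := by
      rw [← log_mul hy.ne' two_ne_zero, ← log_mul (by positivity) (by positivity)]
      congr 1
      field_simp
    linarith [log_le_sub_one_of_pos hy]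
  have hE_log_le : E * log x ≤ x * log 2 / 2 - E + E * log 2 + E * log (E / log 2) := by
    have := mul_le_mul_of_nonneg_left hlog_le hE.le
    calc E * log x ≤ E * (x * log 2 / (2 * E) - 1 + log 2 + log (E / log 2)) := this
      _ = _ := by field_simp
  nlinarith

lemma succ_pow_lt_two_pow {E m : ℕ}
    (hm : (m : ℝ) > 2 * E / log 2 * log (exp 1 * E / log 2)) : (m + 1) ^ E < 2 ^ m := by
  have hl2 : 0 < log 2 := log_pos one_lt_two
  rcases Nat.eq_zero_or_pos E with rfl | hE
  · have : 0 < m := by exact_mod_cast (by simpa using hm : (0 : ℝ) < m)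
    simpa using Nat.one_lt_two_pow this.ne'
  have hE' : (1 : ℝ) ≤ E := by exact_mod_cast hE
  have hlog_eq : log (exp 1 * E / log 2) = 1 + log (E / log 2) := by
    rw [mul_div_assoc, log_mul (exp_pos 1).ne' (by positivity), log_exp]
  have hm_one : (1 : ℝ) ≤ m := by
    have hlog_pos : 0 < log (E / log 2) :=
      log_pos ((one_lt_div hl2).2 (by linarith [log_two_lt_d9]))
    have hbound_pos : 0 < 2 * E / log 2 * log (exp 1 * E / log 2) := by
      rw [hlog_eq]; positivity
    exact Nat.one_le_cast.2 (by exact_mod_cast (by linarith : (0 : ℝ) < m))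
  have key := mul_log_add_one_lt_mul_log_two (E := E) (by positivity) hm_one (by
    rw [hlog_eq] at hm
    calc 2 * E * (1 + log (E / log 2))
        = 2 * E / log 2 * (1 + log (E / log 2)) * log 2 := by field_simp
      _ < m * log 2 := by gcongr)
  have : ((m + 1 : ℕ) : ℝ) ^ E < ((2 : ℕ) : ℝ) ^ m := by
    rw [← log_lt_log_iff (by positivity) (by positivity), log_pow, log_pow]
    push_cast
    exact key
  exact_mod_cast this

lemma encard_traceOn_layerClass_le (D : Type) (V : ℕ → ℕ)
    (H : ∀ t : ℕ, Fin (V (t + 1)) → Set (NetX D V t → Bool))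
    (d : ∀ t : ℕ, Fin (V (t + 1)) → ℕ) (t : ℕ)
    (hVC : ∀ i : Fin (V (t + 1)), ∀ k : ℕ,
      (∃ pts : Fin k → NetX D V t, ∀ v : Fin k → Bool,
        ∃ f ∈ H t i, ∀ j, f (pts j) = v j) → k ≤ d t i)
    {m : ℕ} (q : Fin m → NetX D V t) :
    (traceOn (layerClass D V H t) q).encard ≤ (∏ i, (m + 1) ^ d t i : ℕ) := by
  push_cast
  exact (encard_traceOn_pi_le (H t) q).trans
    (prod_le_prod' fun i _ => by exact_mod_cast encard_traceOn_le_of_vc (hVC i) q)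

theorem network_no_shatter_general (D : Type) (V : ℕ → ℕ) (T : ℕ)
    (H : ∀ t : ℕ, Fin (V (t + 1)) → Set (NetX D V t → Bool))
    (d : ∀ t : ℕ, Fin (V (t + 1)) → ℕ)
    (hVC : ∀ t, ∀ i : Fin (V (t + 1)), ∀ k : ℕ,
      (∃ pts : Fin k → NetX D V t, ∀ v : Fin k → Bool,
        ∃ f ∈ H t i, ∀ j, f (pts j) = v j) → k ≤ d t i)
    (m : ℕ)
    (hm : (m : ℝ) > (2 * (∑ t ∈ Finset.range (T + 1), ∑ i, d t i) / Real.log 2) *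
      Real.log (Real.exp 1 * (∑ t ∈ Finset.range (T + 1), ∑ i, d t i) / Real.log 2)) :
    ∀ out : Fin (V (T + 1)),
      ¬ ∃ pts : Fin m → D, Function.Injective pts ∧
        ∀ v : Fin m → Bool,
          ∃ g ∈ compClass (NetX D V) (layerClass D V H) (T + 1),
            ∀ j, g (pts j) out = v j := by
  rintro out ⟨pts, -, hshatters⟩
  set N := compClass (NetX D V) (layerClass D V H) (T + 1)
  have hupper : (traceOn N pts).encard ≤ ((m + 1) ^ ∑ t ∈ range (T + 1), ∑ i, d t i : ℕ) := by
    simpa only [prod_pow_eq_pow_sum] using encard_traceOn_compClass_le _ _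
      (fun t p => encard_traceOn_layerClass_le D V H d t (hVC t) p) pts (T + 1)
  have hlower : (2 ^ m : ℕ) ≤ (traceOn N pts).encard := by
    have hsurj : Set.univ ⊆ (fun p j => p j out) '' traceOn N pts := fun v _ => by
      obtain ⟨g, hg, hgv⟩ := hshatters v
      exact ⟨g ∘ pts, ⟨g, hg, rfl⟩, funext hgv⟩
    calc ((2 ^ m : ℕ) : ℕ∞) = (Set.univ : Set (Fin m → Bool)).encard := by simp
      _ ≤ _ := (Set.encard_le_encard hsurj).trans (Set.encard_image_le _ _)
  exact (succ_pow_lt_two_pow hm).not_ge (by exact_mod_cast hlower.trans hupper)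

/-- If every neuron class `H t i` has VC-dimension at most `d t i`, then the layered
network class (with `T + 1` layers) cannot shatter any set of size
`m > (2 |E| / log 2) · log (e |E| / log 2)`, where `|E| = Σ_t Σ_i d_{t,i} ≥ 1`. -/
theorem network_no_shatter (D : Type) (V : ℕ → ℕ) (T : ℕ)
    (H : ∀ t : ℕ, Fin (V (t + 1)) → Set (NetX D V t → Bool))
    (d : ∀ t : ℕ, Fin (V (t + 1)) → ℕ)
    (hVC : ∀ t, ∀ i : Fin (V (t + 1)), ∀ k : ℕ,
      (∃ pts : Fin k → NetX D V t, ∀ v : Fin k → Bool,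
        ∃ f ∈ H t i, ∀ j, f (pts j) = v j) → k ≤ d t i)
    (hE : 1 ≤ ∑ t ∈ Finset.range (T + 1), ∑ i, d t i)
    (m : ℕ)
    (hm : (m : ℝ) > (2 * (∑ t ∈ Finset.range (T + 1), ∑ i, d t i) / Real.log 2) *
      Real.log (Real.exp 1 * (∑ t ∈ Finset.range (T + 1), ∑ i, d t i) / Real.log 2)) :
    ∀ out : Fin (V (T + 1)),
      ¬ ∃ pts : Fin m → D, Function.Injective pts ∧
        ∀ v : Fin m → Bool,
          ∃ g ∈ compClass (NetX D V) (layerClass D V H) (T + 1),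
            ∀ j, g (pts j) out = v j :=
  network_no_shatter_general D V T H d hVC m hm
end
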